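/- arXiv:1207.0199 — 3 statements merged into one kernel-verified Lean document; each statement's English description precedes it below -/
import Mathlib

section
/- Let l > 0 with l ≠ 3, and let v : ℝ → ℝ be twice differentiable with v(t) > 0 for all t. Then v''(t)/v(t) + ((l-3)/4)·(v'(t)/v(t))² - l·v'(t)/v(t) + (l - 1 + (l/(l+1))/l) = 0 for all t ∈ ℝ (i.e., the equation with S̄ = l/(l+1)) if and only if there exist constants c₁, c₂ ∈ ℝ such that c₁·exp((l/2)·t) + c₂·t·exp((l/2)·t) > 0 for all t and v(t) = (c₁·exp((l/2)·t) + c₂·t·exp((l/2)·t))^{4/(l+1)} for all t ∈ ℝ. -/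
/-!
For positive `v` and `w = v ^ b`, one has
`w'' - l w' + (l/2)² w = b w (v''/v + (b-1)(v'/v)² - l v'/v + l²/(4b))`.
With `b = (l + 1) / 4` the bracket is exactly the given equation (its constant `l - 1 + 1/(l+1)`
is `l²/(l+1)`), so the equation says that `w` solves a linear equation whose characteristic
polynomial has the double root `l/2`. Hence `w = (c₁ + c₂ t) exp (l t / 2)` and
`v = w ^ (4 / (l + 1))`.
-/

open Real

section PowerOfPositive

variable {v : ℝ → ℝ} (b : ℝ)

lemma hasDerivAt_rpow_const_of_pos {t v' : ℝ} (hv : HasDerivAt v v' t) (hpos : 0 < v t) :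
    HasDerivAt (fun s => v s ^ b) (b * v t ^ b * (v' / v t)) t := by
  convert hv.rpow_const (p := b) (Or.inl hpos.ne') using 1
  rw [rpow_sub hpos, rpow_one]
  ring

lemma deriv_rpow_const_of_pos (hv : Differentiable ℝ v) (hpos : ∀ t, 0 < v t) :
    deriv (fun s => v s ^ b) = fun t => b * v t ^ b * (deriv v t / v t) :=
  funext fun t => (hasDerivAt_rpow_const_of_pos b (hv t).hasDerivAt (hpos t)).deriv

lemma hasDerivAt_deriv_div_self (hv : Differentiable ℝ v) (hv' : Differentiable ℝ (deriv v))
    (hpos : ∀ t, 0 < v t) (t : ℝ) :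
    HasDerivAt (fun s => deriv v s / v s)
      (deriv (deriv v) t / v t - (deriv v t / v t) ^ 2) t := by
  have hv0 := (hpos t).ne'
  exact ((hv' t).hasDerivAt.div (hv t).hasDerivAt hv0).congr_deriv (by field_simp)

lemma hasDerivAt_deriv_rpow_const_of_pos (hv : Differentiable ℝ v)
    (hv' : Differentiable ℝ (deriv v)) (hpos : ∀ t, 0 < v t) (t : ℝ) :
    HasDerivAt (deriv fun s => v s ^ b)
      (b * v t ^ b * (deriv (deriv v) t / v t + (b - 1) * (deriv v t / v t) ^ 2)) t := by
  rw [deriv_rpow_const_of_pos b hv hpos]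
  exact (((hasDerivAt_rpow_const_of_pos b (hv t).hasDerivAt (hpos t)).const_mul b).mul
    (hasDerivAt_deriv_div_self hv hv' hpos t)).congr_deriv (by ring)

end PowerOfPositive

theorem exists_affine_of_deriv_deriv_eq_zero {h : ℝ → ℝ} (hh : Differentiable ℝ h)
    (hh' : Differentiable ℝ (deriv h)) (h0 : ∀ t, deriv (deriv h) t = 0) :
    ∃ a b : ℝ, ∀ t, h t = a + b * t := by
  have hslope : ∀ t, deriv h t = deriv h 0 := fun t => is_const_of_deriv_eq_zero hh' h0 t 0
  have hdiff : ∀ t, HasDerivAt (fun s => h s - deriv h 0 * s) 0 t := fun t =>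
    ((hh t).hasDerivAt.sub ((hasDerivAt_id t).const_mul (deriv h 0))).congr_deriv
      (by simp [hslope t])
  refine ⟨h 0, deriv h 0, fun t => ?_⟩
  have := is_const_of_deriv_eq_zero (fun s => (hdiff s).differentiableAt)
    (fun s => (hdiff s).deriv) t 0
  simp only [mul_zero, sub_zero] at this
  linarith

lemma hasDerivAt_exp_mul (r t : ℝ) : HasDerivAt (fun s => exp (r * s)) (r * exp (r * t)) t := by
  simpa [mul_comm] using ((hasDerivAt_id t).const_mul r).exp

theorem ode_double_root_iff {w : ℝ → ℝ} (r : ℝ) (hw : Differentiable ℝ w)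
    (hw' : Differentiable ℝ (deriv w)) :
    (∀ t, deriv (deriv w) t - 2 * r * deriv w t + r ^ 2 * w t = 0) ↔
      ∃ c₁ c₂ : ℝ, ∀ t, w t = c₁ * exp (r * t) + c₂ * t * exp (r * t) := by
  constructor
  · intro hode
    -- `exp (-r t) * w t` has vanishing second derivative
    let h := fun t => exp (-r * t) * w t
    have hdh : ∀ t, HasDerivAt h (exp (-r * t) * (deriv w t - r * w t)) t := fun t =>
      ((hasDerivAt_exp_mul (-r) t).mul (hw t).hasDerivAt).congr_deriv (by ring)
    have hdh' : ∀ t, HasDerivAt (deriv h) 0 t := fun t => by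
      rw [funext fun s => (hdh s).deriv]
      exact ((hasDerivAt_exp_mul (-r) t).mul
        ((hw' t).hasDerivAt.sub ((hw t).hasDerivAt.const_mul r))).congr_deriv
        (by rw [Pi.sub_apply]; linear_combination exp (-r * t) * hode t)
    obtain ⟨c₁, c₂, hc⟩ := exists_affine_of_deriv_deriv_eq_zero
      (fun t => (hdh t).differentiableAt) (fun t => (hdh' t).differentiableAt)
      (fun t => (hdh' t).deriv)
    refine ⟨c₁, c₂, fun t => ?_⟩
    have hexp : exp (-r * t) * exp (r * t) = 1 := by rw [← exp_add]; simp
    have hct : exp (-r * t) * w t = c₁ + c₂ * t := hc t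
    linear_combination exp (r * t) * hct - w t * hexp
  · rintro ⟨c₁, c₂, hc⟩
    obtain rfl : w = fun t => (c₁ + c₂ * t) * exp (r * t) := funext fun t => by rw [hc]; ring
    have hd : ∀ t, HasDerivAt (fun t => (c₁ + c₂ * t) * exp (r * t))
        ((c₂ + r * (c₁ + c₂ * t)) * exp (r * t)) t := fun t =>
      ((((hasDerivAt_id t).const_mul c₂).const_add c₁).mul
        (hasDerivAt_exp_mul r t)).congr_deriv (by simp; ring)
    have hd' : ∀ t, HasDerivAt (deriv fun t => (c₁ + c₂ * t) * exp (r * t))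
        ((2 * r * c₂ + r ^ 2 * (c₁ + c₂ * t)) * exp (r * t)) t := fun t => by
      rw [funext fun s => (hd s).deriv]
      exact ((((((hasDerivAt_id t).const_mul c₂).const_add c₁).const_mul r).const_add c₂).mul
        (hasDerivAt_exp_mul r t)).congr_deriv (by simp; ring)
    intro t
    rw [(hd' t).deriv, (hd t).deriv]
    ring

lemma rpow_eq_iff_pos_and_eq_rpow_inv {x y b : ℝ} (hx : 0 < x) (hb : b ≠ 0) :
    x ^ b = y ↔ 0 < y ∧ x = y ^ b⁻¹ := by
  constructor
  · rintro rfl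
    exact ⟨rpow_pos_of_pos hx b, (rpow_rpow_inv hx.le hb).symm⟩
  · rintro ⟨hy, rfl⟩
    exact rpow_inv_rpow hy.le hb

theorem stmt_10_general (l : ℝ) (hl : 0 < l) (v : ℝ → ℝ)
    (hv : Differentiable ℝ v) (hv' : Differentiable ℝ (deriv v))
    (hvpos : ∀ t : ℝ, 0 < v t) :
    (∀ t : ℝ, deriv (deriv v) t / v t + ((l - 3) / 4) * (deriv v t / v t) ^ 2
        - l * (deriv v t / v t) + (l - 1 + (l / (l + 1)) / l) = 0) ↔
    ∃ c₁ c₂ : ℝ,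
      (∀ t : ℝ, 0 < c₁ * Real.exp ((l / 2) * t) + c₂ * t * Real.exp ((l / 2) * t)) ∧
      ∀ t : ℝ, v t = (c₁ * Real.exp ((l / 2) * t)
        + c₂ * t * Real.exp ((l / 2) * t)) ^ ((4 : ℝ) / (l + 1)) := by
  set b := (l + 1) / 4
  have hb : b ≠ 0 := by positivity
  have hw' := fun t => hasDerivAt_deriv_rpow_const_of_pos b hv hv' hvpos t
  have hlinear : ∀ t, deriv (deriv fun s => v s ^ b) t - 2 * (l / 2) * deriv (fun s => v s ^ b) t
      + (l / 2) ^ 2 * v t ^ b = b * v t ^ b * (deriv (deriv v) t / v t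
        + ((l - 3) / 4) * (deriv v t / v t) ^ 2 - l * (deriv v t / v t)
        + (l - 1 + (l / (l + 1)) / l)) := fun t => by
    rw [(hw' t).deriv, deriv_rpow_const_of_pos b hv hvpos]
    field_simp
    ring
  have hw : Differentiable ℝ fun s => v s ^ b := fun t =>
    (hasDerivAt_rpow_const_of_pos b (hv t).hasDerivAt (hvpos t)).differentiableAt
  refine (forall_congr' fun t => ?_).trans
    ((ode_double_root_iff (l / 2) hw fun t => (hw' t).differentiableAt).trans ?_)
  · rw [hlinear t, mul_eq_zero_iff_left (mul_ne_zero hb (rpow_pos_of_pos (hvpos t) b).ne')]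
  · simp only [rpow_eq_iff_pos_and_eq_rpow_inv (hvpos _) hb, forall_and, b, inv_div]

theorem stmt_10 (l : ℝ) (hl : 0 < l) (hl3 : l ≠ 3) (v : ℝ → ℝ)
    (hv : Differentiable ℝ v) (hv' : Differentiable ℝ (deriv v))
    (hvpos : ∀ t : ℝ, 0 < v t) :
    (∀ t : ℝ, deriv (deriv v) t / v t + ((l - 3) / 4) * (deriv v t / v t) ^ 2
        - l * (deriv v t / v t) + (l - 1 + (l / (l + 1)) / l) = 0) ↔
    ∃ c₁ c₂ : ℝ,
      (∀ t : ℝ, 0 < c₁ * Real.exp ((l / 2) * t) + c₂ * t * Real.exp ((l / 2) * t)) ∧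
      ∀ t : ℝ, v t = (c₁ * Real.exp ((l / 2) * t)
        + c₂ * t * Real.exp ((l / 2) * t)) ^ ((4 : ℝ) / (l + 1)) :=
  stmt_10_general l hl v hv hv' hvpos
end

section
/- Let p₁, p₂ ∈ ℝ with p₁ ≠ p₂, and set ζ = p₁ + 2p₂ and η = p₁² + 2p₂². Let λ, λ₂ ∈ ℝ and let φ : ℝ → ℝ be twice differentiable with φ(t) > 0 for all t. Then the three equations (i) ζ·(φ'(t) - φ''(t))/φ(t) - (η - ζ)·(φ'(t)/φ(t))² = λ, (ii) -p₁·φ''(t)/φ(t) - (ζ-1)·p₁·(φ'(t)/φ(t))² + (ζ + 2p₁)·φ'(t)/φ(t) = λ + 2, and (iii) λ₂/φ(t)^{2p₂} - p₂·φ''(t)/φ(t) - (ζ-1)·p₂·(φ'(t)/φ(t))² + (ζ + 2p₂)·φ'(t)/φ(t) = λ + 2 hold for all t ∈ ℝ if and only if λ = 0 and there exists c₀ > 0 such that one of the following holds: (1) p₂ = 0, p₁ ≠ 0, λ₂ = 1, and φ(t) = c₀·exp(t/p₁) for all t; (2) p₁ = 0, p₂ ≠ 0, λ₂ = 0, and φ(t)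 = c₀·exp(t/p₂) for all t; (3) p₁ = 4p₂, p₂ ≠ 0, λ₂ = 0, and φ(t) = c₀·exp(t/(3p₂)) for all t. -/
open Polynomial Real

/-! Eliminating `φ''/φ` between the first two equations leaves a quadratic equation
`a U ^ 2 + b U = k` for the continuous function `U = φ'/φ`, and `p₁ ≠ p₂` rules out `a = b = 0`.
A continuous function with values in a finite set is constant, so `φ' = c φ` and
`φ t = φ 0 * exp (c t)`. The equations then become algebraic in `c`, except for the term
`λ₂ / φ ^ (2 p₂)`, which must be constant in `t` and therefore vanishes unless `p₂ c = 0`;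
solving the resulting polynomial system gives the three families. -/

theorem Continuous.apply_eq_of_isRoot {α K : Type*} [TopologicalSpace α] [PreconnectedSpace α]
    [CommRing K] [IsDomain K] [TopologicalSpace K] [T1Space K] {f : α → K} (hf : Continuous f)
    {p : K[X]} (hp : p ≠ 0) (hroot : ∀ x, p.IsRoot (f x)) (x y : α) : f x = f y :=
  isPreconnected_univ.constant_of_mapsTo (finite_setOfPred_isRoot hp).isDiscrete hf.continuousOn
    (fun x _ => hroot x) trivial trivial

theorem Continuous.apply_eq_of_quadratic {α K : Type*} [TopologicalSpace α] [PreconnectedSpace α]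
    [Field K] [TopologicalSpace K] [T1Space K] {f : α → K} (hf : Continuous f)
    {a b c : K} (hab : a ≠ 0 ∨ b ≠ 0) (hq : ∀ x, a * f x ^ 2 + b * f x = c) (x y : α) :
    f x = f y := by
  refine hf.apply_eq_of_isRoot (p := C a * X ^ 2 + C b * X - C c) ?_ (fun x => ?_) x y
  · intro h0
    have h2 := congrArg (coeff · 2) h0
    have h1 := congrArg (coeff · 1) h0
    simp [coeff_C] at h1 h2
    tauto
  · simp [hq x]

theorem hasDerivAt_const_mul_exp_mul (c₀ c t : ℝ) :
    HasDerivAt (fun t => c₀ * exp (c * t)) (c * (c₀ * exp (c * t))) t := by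
  have := (((hasDerivAt_id t).const_mul c).exp).const_mul c₀
  simpa [mul_comm, mul_left_comm] using this

theorem eq_mul_exp_of_deriv_eq_mul {φ : ℝ → ℝ} {c : ℝ} (hφ : Differentiable ℝ φ)
    (hder : ∀ t, deriv φ t = c * φ t) (t : ℝ) : φ t = φ 0 * exp (c * t) := by
  have hg : ∀ s, HasDerivAt (fun s => φ s * exp (-c * s)) 0 s := fun s => by
    have := (hder s ▸ (hφ s).hasDerivAt).mul (hasDerivAt_const_mul_exp_mul 1 (-c) s)
    simp only [one_mul] at this
    exact this.congr_deriv (by ring)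
  have := is_const_of_deriv_eq_zero (fun s => (hg s).differentiableAt) (fun s => (hg s).deriv) t 0
  rw [mul_zero, exp_zero, mul_one] at this
  rw [← this, mul_assoc, ← exp_add, neg_mul, neg_add_cancel, exp_zero, mul_one]

theorem deriv_eq_mul_of_eq_mul_exp {φ : ℝ → ℝ} {c₀ c : ℝ} (hφ : ∀ t, φ t = c₀ * exp (c * t))
    (t : ℝ) : deriv φ t = c * φ t := by
  rw [funext hφ]
  exact (hasDerivAt_const_mul_exp_mul c₀ c t).deriv

theorem eq_zero_or_mul_eq_zero_of_div_rpow_eq {a b c r : ℝ} (hb : 0 < b)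
    (h : a / (b * exp c) ^ r = a / b ^ r) : a = 0 ∨ r * c = 0 := by
  rw [mul_rpow hb.le (exp_pos c).le, ← exp_mul] at h
  refine (eq_or_ne a 0).imp_right fun ha => ?_
  have hbr : b ^ r ≠ 0 := (rpow_pos_of_pos hb r).ne'
  have : exp (c * r) = 1 := by
    field_simp at h
    exact h.symm
  rw [mul_comm]
  exact exp_eq_one_iff _ |>.1 this

namespace Kasner

def EinsteinSystem (p₁ p₂ ζ η lam lam₂ : ℝ) (φ : ℝ → ℝ) : Prop :=
  (∀ t, ζ * (deriv φ t - deriv (deriv φ) t) / φ t - (η - ζ) * (deriv φ t / φ t) ^ 2 = lam) ∧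
  (∀ t, -p₁ * deriv (deriv φ) t / φ t - (ζ - 1) * p₁ * (deriv φ t / φ t) ^ 2
    + (ζ + 2 * p₁) * (deriv φ t / φ t) = lam + 2) ∧
  (∀ t, lam₂ / φ t ^ (2 * p₂) - p₂ * deriv (deriv φ) t / φ t
    - (ζ - 1) * p₂ * (deriv φ t / φ t) ^ 2 + (ζ + 2 * p₂) * (deriv φ t / φ t) = lam + 2)

def IsExplicitSolution (p₁ p₂ lam lam₂ : ℝ) (φ : ℝ → ℝ) : Prop :=
  lam = 0 ∧ ∃ c₀ : ℝ, 0 < c₀ ∧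
    ((p₂ = 0 ∧ p₁ ≠ 0 ∧ lam₂ = 1 ∧ ∀ t, φ t = c₀ * exp (t / p₁)) ∨
     (p₁ = 0 ∧ p₂ ≠ 0 ∧ lam₂ = 0 ∧ ∀ t, φ t = c₀ * exp (t / p₂)) ∨
     (p₁ = 4 * p₂ ∧ p₂ ≠ 0 ∧ lam₂ = 0 ∧ ∀ t, φ t = c₀ * exp (t / (3 * p₂))))

variable {p₁ p₂ ζ η lam lam₂ : ℝ} {φ : ℝ → ℝ}

theorem EinsteinSystem.quadratic (h : EinsteinSystem p₁ p₂ ζ η lam lam₂ φ) (t : ℝ) :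
    p₁ * (η - ζ ^ 2) * (deriv φ t / φ t) ^ 2 + ζ * (ζ + p₁) * (deriv φ t / φ t)
      = (ζ - p₁) * lam + 2 * ζ := by
  linear_combination ζ * h.2.1 t - p₁ * h.1 t

theorem quadratic_nondegenerate (hp : p₁ ≠ p₂) :
    p₁ * ((p₁ ^ 2 + 2 * p₂ ^ 2) - (p₁ + 2 * p₂) ^ 2) ≠ 0 ∨
      (p₁ + 2 * p₂) * ((p₁ + 2 * p₂) + p₁) ≠ 0 := by
  by_contra! ⟨ha, hb⟩
  have hp₂ : p₂ = 0 := by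
    rcases mul_eq_zero.1 hb with h | h
    · have : p₁ = -2 * p₂ := by linarith
      subst this
      have : p₂ ^ 3 = 0 := by linear_combination -ha / 12
      exact pow_eq_zero_iff (by norm_num) |>.1 this
    · have : p₁ = -p₂ := by linarith
      subst this
      have : p₂ ^ 3 = 0 := by linear_combination -ha / 2
      exact pow_eq_zero_iff (by norm_num) |>.1 this
  subst hp₂
  exact hp (by simpa using hb)

theorem EinsteinSystem.exists_deriv_eq_mul
    (h : EinsteinSystem p₁ p₂ (p₁ + 2 * p₂) (p₁ ^ 2 + 2 * p₂ ^ 2) lam lam₂ φ) (hp : p₁ ≠ p₂)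
    (hφ : Differentiable ℝ φ) (hφ' : Differentiable ℝ (deriv φ)) (hφpos : ∀ t, 0 < φ t) :
    ∃ c, ∀ t, deriv φ t = c * φ t := by
  have hU : Continuous fun t => deriv φ t / φ t :=
    hφ'.continuous.div hφ.continuous fun t => (hφpos t).ne'
  refine ⟨deriv φ 0 / φ 0, fun t => ?_⟩
  rw [← hU.apply_eq_of_quadratic (quadratic_nondegenerate hp) h.quadratic t 0,
    div_mul_cancel₀ _ (hφpos t).ne']

theorem einsteinSystem_iff_of_deriv_eq_mul {c : ℝ} (hφ : Differentiable ℝ φ)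
    (hφpos : ∀ t, 0 < φ t) (hder : ∀ t, deriv φ t = c * φ t) :
    EinsteinSystem p₁ p₂ ζ η lam lam₂ φ ↔
      ζ * c - η * c ^ 2 = lam ∧ (ζ + 2 * p₁) * c - ζ * p₁ * c ^ 2 = lam + 2 ∧
        ∀ t, lam₂ / φ t ^ (2 * p₂) + (ζ + 2 * p₂) * c - ζ * p₂ * c ^ 2 = lam + 2 := by
  have hder2 : ∀ t, deriv (deriv φ) t = c ^ 2 * φ t := fun t => by
    rw [funext hder, deriv_const_mul _ (hφ t), hder t]
    ring
  have e : ∀ t,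
      ζ * (deriv φ t - deriv (deriv φ) t) / φ t - (η - ζ) * (deriv φ t / φ t) ^ 2
        = ζ * c - η * c ^ 2 ∧
      -p₁ * deriv (deriv φ) t / φ t - (ζ - 1) * p₁ * (deriv φ t / φ t) ^ 2
        + (ζ + 2 * p₁) * (deriv φ t / φ t) = (ζ + 2 * p₁) * c - ζ * p₁ * c ^ 2 ∧
      lam₂ / φ t ^ (2 * p₂) - p₂ * deriv (deriv φ) t / φ t
        - (ζ - 1) * p₂ * (deriv φ t / φ t) ^ 2 + (ζ + 2 * p₂) * (deriv φ t / φ t)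
        = lam₂ / φ t ^ (2 * p₂) + (ζ + 2 * p₂) * c - ζ * p₂ * c ^ 2 := fun t => by
    have := (hφpos t).ne'
    refine ⟨?_, ?_, ?_⟩ <;> (rw [hder, hder2]; field_simp; ring)
  simp only [EinsteinSystem, fun t => (e t).1, fun t => (e t).2.1, fun t => (e t).2.2,
    forall_const]

theorem algebraic_system_iff (hp : p₁ ≠ p₂) {c μ : ℝ} :
    ((p₁ + 2 * p₂) * c - (p₁ ^ 2 + 2 * p₂ ^ 2) * c ^ 2 = lam ∧
      ((p₁ + 2 * p₂) + 2 * p₁) * c - (p₁ + 2 * p₂) * p₁ * c ^ 2 = lam + 2 ∧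
      μ + ((p₁ + 2 * p₂) + 2 * p₂) * c - (p₁ + 2 * p₂) * p₂ * c ^ 2 = lam + 2 ∧
      (p₂ * c = 0 ∨ μ = 0)) ↔
    lam = 0 ∧ ((p₂ = 0 ∧ p₁ * c = 1 ∧ μ = 1) ∨ (p₁ = 0 ∧ p₂ * c = 1 ∧ μ = 0) ∨
      (p₁ = 4 * p₂ ∧ 3 * p₂ * c = 1 ∧ μ = 0)) := by
  constructor
  · rintro ⟨E1, E2, E3, hμ⟩
    have hc : c ≠ 0 := by
      rintro rfl
      linarith
    rcases hμ with hp₂ | rfl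
    · obtain rfl : p₂ = 0 := (mul_eq_zero.1 hp₂).resolve_right hc
      have hc₁ : p₁ * c = 1 := by linear_combination (E2 - E1) / 2
      refine ⟨by linear_combination -E1 - p₁ * c * hc₁, Or.inl ⟨rfl, hc₁, ?_⟩⟩
      linear_combination E3 - E1 - (1 + p₁ * c) * hc₁
    · have hζ : (p₁ + 2 * p₂) * c = 2 := by
        have : (p₁ - p₂) * c * ((p₁ + 2 * p₂) * c - 2) = 0 := by linear_combination E3 - E2
        rcases mul_eq_zero.1 this with h | h
        · exact absurd ((mul_eq_zero.1 h).resolve_right hc) (sub_ne_zero.2 hp)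
        · linarith
      have hlam : lam = 0 := by linear_combination -E2 + (1 - p₁ * c) * hζ
      refine ⟨hlam, Or.inr ?_⟩
      have : p₁ * (p₁ - 4 * p₂) * c ^ 2 = 0 := by
        linear_combination -2 * E1 - (p₁ + 2 * p₂) * c * hζ - 2 * hlam
      rcases mul_eq_zero.1 ((mul_eq_zero.1 this).resolve_right (pow_ne_zero 2 hc)) with h | h
      · exact Or.inl ⟨h, by linear_combination hζ / 2 - c * h / 2, rfl⟩
      · exact Or.inr ⟨by linarith, by linear_combination hζ / 2 - c * h / 2, rfl⟩
  · rintro ⟨rfl, ⟨rfl, hc, rfl⟩ | ⟨rfl, hc, rfl⟩ | ⟨rfl, hc, rfl⟩⟩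
    · exact ⟨by linear_combination -(p₁ * c) * hc, by linear_combination (2 - p₁ * c) * hc,
        by linear_combination hc, by simp⟩
    · exact ⟨by linear_combination -(2 * p₂ * c) * hc, by linear_combination 2 * hc,
        by linear_combination (2 - 2 * p₂ * c) * hc, Or.inr rfl⟩
    · exact ⟨by linear_combination -(6 * p₂ * c) * hc, by linear_combination (2 - 8 * p₂ * c) * hc,
        by linear_combination (2 - 2 * p₂ * c) * hc, Or.inr rfl⟩

theorem EinsteinSystem.isExplicitSolution
    (h : EinsteinSystem p₁ p₂ (p₁ + 2 * p₂) (p₁ ^ 2 + 2 * p₂ ^ 2) lam lam₂ φ) (hp : p₁ ≠ p₂)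
    (hφ : Differentiable ℝ φ) (hφ' : Differentiable ℝ (deriv φ)) (hφpos : ∀ t, 0 < φ t) :
    IsExplicitSolution p₁ p₂ lam lam₂ φ := by
  obtain ⟨c, hder⟩ := h.exists_deriv_eq_mul hp hφ hφ' hφpos
  have hexp := eq_mul_exp_of_deriv_eq_mul hφ hder
  obtain ⟨E1, E2, E3⟩ := (einsteinSystem_iff_of_deriv_eq_mul hφ hφpos hder).1 h
  have hμ : p₂ * c = 0 ∨ lam₂ / φ 0 ^ (2 * p₂) = 0 := by
    have h01 : lam₂ / (φ 0 * exp c) ^ (2 * p₂) = lam₂ / φ 0 ^ (2 * p₂) := by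
      have := E3 1
      rw [hexp 1, mul_one] at this
      linarith [E3 0]
    rcases eq_zero_or_mul_eq_zero_of_div_rpow_eq (hφpos 0) h01 with h0 | h0
    · exact Or.inr (by rw [h0, zero_div])
    · exact Or.inl (by linarith)
  obtain ⟨rfl, hcase⟩ := (algebraic_system_iff hp).1 ⟨E1, E2, E3 0, hμ⟩
  have hlam₂ (h0 : lam₂ / φ 0 ^ (2 * p₂) = 0) : lam₂ = 0 :=
    (div_eq_zero_iff.1 h0).resolve_right (rpow_pos_of_pos (hφpos 0) _).ne'
  have hφdiv {p : ℝ} (hpc : p * c = 1) (t : ℝ) : φ t = φ 0 * exp (t / p) := by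
    rw [hexp t, div_eq_inv_mul, inv_eq_of_mul_eq_one_right hpc]
  refine ⟨rfl, φ 0, hφpos 0, ?_⟩
  rcases hcase with ⟨rfl, hc, hμ⟩ | ⟨rfl, hc, hμ⟩ | ⟨rfl, hc, hμ⟩
  · exact Or.inl ⟨rfl, left_ne_zero_of_mul_eq_one hc, by simpa using hμ, hφdiv hc⟩
  · exact Or.inr <| Or.inl ⟨rfl, left_ne_zero_of_mul_eq_one hc, hlam₂ hμ, hφdiv hc⟩
  · refine Or.inr <| Or.inr ⟨rfl, ?_, hlam₂ hμ, hφdiv hc⟩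
    exact right_ne_zero_of_mul (left_ne_zero_of_mul_eq_one hc)

theorem IsExplicitSolution.einsteinSystem (h : IsExplicitSolution p₁ p₂ lam lam₂ φ)
    (hp : p₁ ≠ p₂) (hφ : Differentiable ℝ φ) (hφpos : ∀ t, 0 < φ t) :
    EinsteinSystem p₁ p₂ (p₁ + 2 * p₂) (p₁ ^ 2 + 2 * p₂ ^ 2) lam lam₂ φ := by
  obtain ⟨rfl, c₀, -, hcase⟩ := h
  obtain ⟨c, hφexp, hcases⟩ : ∃ c, (∀ t, φ t = c₀ * exp (c * t)) ∧ ∀ t,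
      (p₂ = 0 ∧ p₁ * c = 1 ∧ lam₂ / φ t ^ (2 * p₂) = 1) ∨
      (p₁ = 0 ∧ p₂ * c = 1 ∧ lam₂ / φ t ^ (2 * p₂) = 0) ∨
      (p₁ = 4 * p₂ ∧ 3 * p₂ * c = 1 ∧ lam₂ / φ t ^ (2 * p₂) = 0) := by
    simp only [div_eq_inv_mul _ p₁, div_eq_inv_mul _ p₂, div_eq_inv_mul _ (3 * p₂)] at hcase
    rcases hcase with ⟨rfl, hp₁, rfl, hφe⟩ | ⟨rfl, hp₂, rfl, hφe⟩ | ⟨rfl, hp₂, rfl, hφe⟩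
    · exact ⟨_, hφe, fun t => Or.inl ⟨rfl, mul_inv_cancel₀ hp₁, by simp⟩⟩
    · exact ⟨_, hφe, fun t => Or.inr <| Or.inl ⟨rfl, mul_inv_cancel₀ hp₂, zero_div _⟩⟩
    · exact ⟨_, hφe, fun t => Or.inr <| Or.inr ⟨rfl, mul_inv_cancel₀ (by positivity), zero_div _⟩⟩
  rw [einsteinSystem_iff_of_deriv_eq_mul hφ hφpos (deriv_eq_mul_of_eq_mul_exp hφexp)]
  have hconst t := (algebraic_system_iff hp).2 ⟨rfl, hcases t⟩
  exact ⟨(hconst 0).1, (hconst 0).2.1, fun t => (hconst t).2.2.1⟩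

end Kasner

theorem stmt_13 (p₁ p₂ : ℝ) (hp : p₁ ≠ p₂) (ζ η : ℝ)
    (hζ : ζ = p₁ + 2 * p₂) (hη : η = p₁ ^ 2 + 2 * p₂ ^ 2)
    (lam lam₂ : ℝ) (φ : ℝ → ℝ)
    (hφ : Differentiable ℝ φ) (hφ' : Differentiable ℝ (deriv φ))
    (hφpos : ∀ t : ℝ, 0 < φ t) :
    ((∀ t : ℝ, ζ * (deriv φ t - deriv (deriv φ) t) / φ t
        - (η - ζ) * (deriv φ t / φ t) ^ 2 = lam) ∧
     (∀ t : ℝ, -p₁ * deriv (deriv φ) t / φ t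
        - (ζ - 1) * p₁ * (deriv φ t / φ t) ^ 2
        + (ζ + 2 * p₁) * (deriv φ t / φ t) = lam + 2) ∧
     (∀ t : ℝ, lam₂ / φ t ^ (2 * p₂) - p₂ * deriv (deriv φ) t / φ t
        - (ζ - 1) * p₂ * (deriv φ t / φ t) ^ 2
        + (ζ + 2 * p₂) * (deriv φ t / φ t) = lam + 2)) ↔
    (lam = 0 ∧ ∃ c₀ : ℝ, 0 < c₀ ∧
      ((p₂ = 0 ∧ p₁ ≠ 0 ∧ lam₂ = 1 ∧ ∀ t : ℝ, φ t = c₀ * Real.exp (t / p₁)) ∨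
       (p₁ = 0 ∧ p₂ ≠ 0 ∧ lam₂ = 0 ∧ ∀ t : ℝ, φ t = c₀ * Real.exp (t / p₂)) ∨
       (p₁ = 4 * p₂ ∧ p₂ ≠ 0 ∧ lam₂ = 0 ∧ ∀ t : ℝ, φ t = c₀ * Real.exp (t / (3 * p₂))))) := by
  subst hζ hη
  exact ⟨fun h => Kasner.EinsteinSystem.isExplicitSolution h hp hφ hφ' hφpos,
    fun h => Kasner.IsExplicitSolution.einsteinSystem h hp hφ hφpos⟩
end

section
/- Let η > 0 and S̄ ∈ ℝ, and let φ : ℝ → ℝ be continuously differentiable with φ(t) > 0 for all t. Suppose -η·(φ'(t)/φ(t))² - 6 = S̄ for all t ∈ ℝ. Then S̄ ≤ -6; if S̄ = -6 then φ is constant; and if S̄ < -6 then there exists c₀ > 0 such that either φ(t) = c₀·exp(√(-(S̄+6)/η)·t) for all t ∈ ℝ, or φ(t) = c₀·exp(-√(-(S̄+6)/η)·t) for all t ∈ ℝ. -/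
/-! The equation says that the square of the logarithmic derivative `φ' / φ` is the constant
`-(S̄ + 6) / η`. When this constant is positive, `φ' / φ` is continuous and never zero on the
connected line, so it is constantly `√(-(S̄ + 6) / η)` or its negative, and `φ` solves a linear
ODE `φ' = a φ`. -/

open Real Set

theorem eq_mul_exp_of_deriv_eq_mul_s18 {f : ℝ → ℝ} {a : ℝ} (hf : Differentiable ℝ f)
    (h : ∀ t, deriv f t = a * f t) (t : ℝ) : f t = f 0 * exp (a * t) := by
  have hderiv : ∀ s, HasDerivAt (fun s => f s * exp (-a * s)) 0 s := fun s => by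
    have hf' : HasDerivAt f (a * f s) s := h s ▸ (hf s).hasDerivAt
    have hexp : HasDerivAt (fun s => exp (-a * s)) (exp (-a * s) * -a) s := by
      simpa using ((hasDerivAt_id s).const_mul (-a)).exp
    exact (hf'.mul hexp).congr_deriv (by ring)
  have hconst : f t * exp (-a * t) = f 0 := by
    simpa using is_const_of_deriv_eq_zero (fun s => (hderiv s).differentiableAt)
      (fun s => (hderiv s).deriv) t 0
  rw [← hconst, mul_assoc, ← exp_add]
  simp

theorem stmt_18 (η Sbar : ℝ) (hη : 0 < η) (φ : ℝ → ℝ)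
    (hφ : ContDiff ℝ 1 φ) (hφpos : ∀ t : ℝ, 0 < φ t)
    (heq : ∀ t : ℝ, -η * (deriv φ t / φ t) ^ 2 - 6 = Sbar) :
    Sbar ≤ -6 ∧
    (Sbar = -6 → ∃ c : ℝ, ∀ t : ℝ, φ t = c) ∧
    (Sbar < -6 → ∃ c₀ : ℝ, 0 < c₀ ∧
      ((∀ t : ℝ, φ t = c₀ * Real.exp (Real.sqrt (-(Sbar + 6) / η) * t)) ∨
       (∀ t : ℝ, φ t = c₀ * Real.exp (-(Real.sqrt (-(Sbar + 6) / η)) * t)))) := by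
  have hd : Differentiable ℝ φ := hφ.differentiable one_ne_zero
  have hφ0 : ∀ t, φ t ≠ 0 := fun t => (hφpos t).ne'
  have hsq : ∀ t, (deriv φ t / φ t) ^ 2 = -(Sbar + 6) / η := fun t => by
    rw [← heq t]
    field_simp
    ring
  have hS : Sbar ≤ -6 := by nlinarith [heq 0, sq_nonneg (deriv φ 0 / φ 0)]
  refine ⟨hS, fun hS6 => ?_, fun hSlt => ?_⟩
  · have hderiv : ∀ t, deriv φ t = 0 := fun t => by simpa [hS6, hφ0 t] using hsq t
    exact ⟨φ 0, fun t => is_const_of_deriv_eq_zero hd hderiv t 0⟩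
  · set k := √(-(Sbar + 6) / η)
    have hc : 0 < -(Sbar + 6) / η := div_pos (by linarith) hη
    have hk : 0 < k := sqrt_pos.2 hc
    have hlogderiv : Continuous fun t => deriv φ t / φ t :=
      (hφ.continuous_deriv le_rfl).div hφ.continuous hφ0
    refine ⟨φ 0, hφpos 0, ?_⟩
    rcases isPreconnected_univ.eq_or_eq_neg_of_sq_eq hlogderiv.continuousOn
      (continuousOn_const (c := k)) (fun t _ => by simp only [Pi.pow_apply, hsq, k, sq_sqrt hc.le])
      (fun _ => hk.ne') with h | h
    · exact Or.inl <| eq_mul_exp_of_deriv_eq_mul_s18 hd fun s => (div_eq_iff (hφ0 s)).1 (h trivial)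
    · exact Or.inr <| eq_mul_exp_of_deriv_eq_mul_s18 hd fun s => (div_eq_iff (hφ0 s)).1 (h trivial)
end
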